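/- arXiv:2311.06086 — 4 statements merged into one kernel-verified Lean document; each statement's English description precedes it below -/
import Mathlib

section
/- The function f_p(x) = 2·sqrt(-p³·ln(x)/π)·x^{p-1} for x ∈ (0,1) (and 0 elsewhere) is a probability density: it is nonnegative and its integral over (0,1) equals 1, for every p > 0. -/
open MeasureTheory Real Set

noncomputable def matsuokaPDF (p x : ℝ) : ℝ :=
  if x ∈ Set.Ioo (0:ℝ) 1 then
    2 * Real.sqrt (-(p ^ 3) * Real.log x / Real.pi) * x ^ (p - 1)
  else 0

lemma exp_neg_image : (fun t : ℝ => Real.exp (-t)) '' Set.Ioi 0 = Set.Ioo (0:ℝ) 1 := by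
  ext x
  constructor
  · rintro ⟨t, ht, rfl⟩
    exact ⟨Real.exp_pos _, Real.exp_lt_one_iff.mpr (neg_neg_iff_pos.mpr ht)⟩
  · rintro ⟨hx0, hx1⟩
    exact ⟨-Real.log x, by simpa using Real.log_neg hx0 hx1, by simp [Real.exp_log hx0]⟩

theorem matsuokaPDF_is_density (p : ℝ) (hp : 0 < p) :
    (∀ x : ℝ, 0 ≤ matsuokaPDF p x) ∧ ∫ x in (0:ℝ)..1, matsuokaPDF p x = 1 := by
  constructor
  · intro x
    unfold matsuokaPDF
    split
    · rename_i h
      obtain ⟨hx0, _⟩ := h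
      positivity
    · exact le_refl _
  · rw [intervalIntegral.integral_of_le (by norm_num), MeasureTheory.integral_Ioc_eq_integral_Ioo]
    have hcong : ∫ x in Set.Ioo (0:ℝ) 1, matsuokaPDF p x
        = ∫ x in Set.Ioo (0:ℝ) 1, 2 * Real.sqrt (-(p ^ 3) * Real.log x / Real.pi) * x ^ (p - 1) := by
      refine setIntegral_congr_fun measurableSet_Ioo fun x hx => ?_
      simp [matsuokaPDF, hx]
    rw [hcong, ← exp_neg_image,
      integral_image_eq_integral_abs_deriv_smul measurableSet_Ioi
        (fun t _ => ((hasDerivAt_neg t).exp).hasDerivWithinAt)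
        (fun a _ b _ hab => by
          have := Real.exp_injective hab; linarith)
        _]
    have hπ := Real.pi_pos
    have key : ∀ t ∈ Set.Ioi (0:ℝ),
        |Real.exp (-t) * -1| • (2 * Real.sqrt (-(p ^ 3) * Real.log (Real.exp (-t)) / Real.pi)
          * (Real.exp (-t)) ^ (p - 1))
        = (2 * Real.sqrt (p ^ 3 / Real.pi)) * (t ^ ((3:ℝ)/2 - 1) * Real.exp (-(p * t))) := by
      intro t ht
      have ht0 : 0 < t := ht
      rw [Real.log_exp, smul_eq_mul, abs_of_nonpos (by simp [Real.exp_pos, (Real.exp_pos _).le]),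
        Real.rpow_def_of_pos (Real.exp_pos _), Real.log_exp]
      have h1 : -(p ^ 3) * -t / Real.pi = (p ^ 3 / Real.pi) * t := by ring
      rw [h1, Real.sqrt_mul (by positivity) t]
      have h2 : Real.sqrt t = t ^ ((3:ℝ)/2 - 1) := by
        rw [Real.sqrt_eq_rpow]; norm_num
      rw [h2]
      have h3 : Real.exp (-t) * Real.exp (-t * (p - 1)) = Real.exp (-(p * t)) := by
        rw [← Real.exp_add]; ring_nf
      linear_combination (2 * Real.sqrt (p ^ 3 / Real.pi) * t ^ ((3:ℝ)/2 - 1)) * h3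
    rw [setIntegral_congr_fun measurableSet_Ioi key, integral_const_mul,
      Real.integral_rpow_mul_exp_neg_mul_Ioi (by norm_num) hp]
    have hΓ : Real.Gamma ((3:ℝ)/2) = Real.sqrt Real.pi / 2 := by
      rw [show ((3:ℝ)/2) = 1/2 + 1 by norm_num, Real.Gamma_add_one (by norm_num),
        Real.Gamma_one_half_eq]
      ring
    have h4 : Real.sqrt (p ^ 3 / Real.pi) = p ^ ((3:ℝ)/2) / Real.sqrt Real.pi := by
      rw [Real.sqrt_div (by positivity), Real.sqrt_eq_rpow, ← Real.rpow_natCast p 3,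
        ← Real.rpow_mul hp.le]
      norm_num
    have h5 : ((1:ℝ)/p) ^ ((3:ℝ)/2) = (p ^ ((3:ℝ)/2))⁻¹ := by
      rw [one_div, Real.inv_rpow hp.le]
    have hπs : Real.sqrt Real.pi ≠ 0 := ne_of_gt (Real.sqrt_pos.mpr hπ)
    have hps : p ^ ((3:ℝ)/2) ≠ 0 := ne_of_gt (Real.rpow_pos_of_pos hp _)
    rw [hΓ, h4, h5]
    field_simp
end

section
/- For X ~ M(p) and any real k > -p, the k-th moment of X equals (p/(p+k))^{3/2}. In particular E(X) = (p/(p+1))^{3/2} and Var(X) = (p/(p+2))^{3/2} - (p/(p+1))³. -/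
open MeasureTheory Real Set

lemma matsuoka_moment (p : ℝ) (hp : 0 < p) (k : ℝ) (hk : -p < k) :
    ∫ x in (0:ℝ)..1, x ^ k * matsuokaPDF p x = (p / (p + k)) ^ ((3:ℝ)/2) := by
  have hpk : 0 < p + k := by linarith
  have himg : (fun t : ℝ => Real.exp (-t)) '' Set.Ioi 0 = Set.Ioo (0:ℝ) 1 := by
    ext x
    constructor
    · rintro ⟨t, ht, rfl⟩
      exact ⟨Real.exp_pos _, Real.exp_lt_one_iff.mpr (by simpa using ht)⟩
    · rintro ⟨hx0, hx1⟩
      refine ⟨-Real.log x, ?_, by simp [Real.exp_log hx0]⟩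
      simpa using Real.log_neg hx0 hx1
  have hderiv : ∀ t ∈ Set.Ioi (0:ℝ),
      HasDerivWithinAt (fun t : ℝ => Real.exp (-t)) (-Real.exp (-t)) (Set.Ioi 0) t := by
    intro t _
    have h : HasDerivAt (fun t : ℝ => Real.exp (-t)) (Real.exp (-t) * (-1)) t :=
      (Real.hasDerivAt_exp (-t)).comp t (hasDerivAt_neg t)
    simpa using h.hasDerivWithinAt
  have hinj : Set.InjOn (fun t : ℝ => Real.exp (-t)) (Set.Ioi 0) := by
    intro a _ b _ h
    have := Real.exp_injective h
    linarith
  have hchg := integral_image_eq_integral_abs_deriv_smul measurableSet_Ioi hderiv hinj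
    (fun x => x ^ k * matsuokaPDF p x)
  rw [himg] at hchg
  have key : ∫ x in Set.Ioo (0:ℝ) 1, x ^ k * matsuokaPDF p x
      = (2 * Real.sqrt (p ^ 3 / Real.pi)) *
        ∫ t in Set.Ioi (0:ℝ), t ^ ((3:ℝ)/2 - 1) * Real.exp (-((p + k) * t)) := by
    rw [hchg, ← integral_const_mul]
    refine setIntegral_congr_fun measurableSet_Ioi (fun t ht => ?_)
    have ht' : (0:ℝ) < t := ht
    have hmem : Real.exp (-t) ∈ Set.Ioo (0:ℝ) 1 :=
      ⟨Real.exp_pos _, Real.exp_lt_one_iff.mpr (by simpa using ht')⟩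
    have habs : |(-Real.exp (-t))| = Real.exp (-t) := by
      rw [abs_neg, abs_of_pos (Real.exp_pos _)]
    have hlog : Real.log (Real.exp (-t)) = -t := Real.log_exp _
    have hsqrt : Real.sqrt (-(p ^ 3) * Real.log (Real.exp (-t)) / Real.pi)
        = Real.sqrt (p ^ 3 / Real.pi) * Real.sqrt t := by
      rw [hlog, show -(p ^ 3) * (-t) / Real.pi = (p ^ 3 / Real.pi) * t by ring,
        Real.sqrt_mul (by positivity)]
    have hrk : Real.exp (-t) ^ k = Real.exp (-t * k) := by
      rw [Real.rpow_def_of_pos (Real.exp_pos _), hlog]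
    have hrp : Real.exp (-t) ^ (p - 1) = Real.exp (-t * (p - 1)) := by
      rw [Real.rpow_def_of_pos (Real.exp_pos _), hlog]
    have hsq : Real.sqrt t = t ^ ((3:ℝ)/2 - 1) := by
      rw [Real.sqrt_eq_rpow]; norm_num
    simp only [smul_eq_mul, matsuokaPDF, if_pos hmem, habs, hsqrt, hrk, hrp, hsq]
    rw [show Real.exp (-t) * (Real.exp (-t * k) *
        (2 * (Real.sqrt (p ^ 3 / Real.pi) * t ^ ((3:ℝ)/2 - 1)) * Real.exp (-t * (p - 1))))
      = 2 * Real.sqrt (p ^ 3 / Real.pi) * (t ^ ((3:ℝ)/2 - 1) *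
        (Real.exp (-t) * Real.exp (-t * k) * Real.exp (-t * (p - 1)))) by ring,
      ← Real.exp_add, ← Real.exp_add]
    ring_nf
  rw [intervalIntegral.integral_of_le zero_le_one, integral_Ioc_eq_integral_Ioo, key,
    integral_rpow_mul_exp_neg_mul_Ioi (by norm_num : (0:ℝ) < 3/2) hpk]
  have hG : Real.Gamma ((3:ℝ)/2) = Real.sqrt Real.pi / 2 := by
    rw [show (3:ℝ)/2 = 1/2 + 1 by norm_num, Real.Gamma_add_one (by norm_num),
      Real.Gamma_one_half_eq]
    ring
  rw [hG]
  have h1 : Real.sqrt (p ^ 3 / Real.pi) = p ^ ((3:ℝ)/2) / Real.sqrt Real.pi := by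
    rw [Real.sqrt_div (by positivity) Real.pi, Real.sqrt_eq_rpow,
      ← Real.rpow_natCast p 3, ← Real.rpow_mul hp.le]
    norm_num
  have h2 : ((1:ℝ)/(p+k)) ^ ((3:ℝ)/2) = 1 / (p+k) ^ ((3:ℝ)/2) := by
    rw [Real.div_rpow (by norm_num) hpk.le, Real.one_rpow]
  rw [h1, h2, Real.div_rpow hp.le hpk.le]
  have hpi : Real.sqrt Real.pi ≠ 0 := by positivity
  have hpk' : (p+k) ^ ((3:ℝ)/2) ≠ 0 := by positivity
  field_simp

theorem matsuoka_moments (p : ℝ) (hp : 0 < p) :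
    (∀ k : ℝ, -p < k →
      ∫ x in (0:ℝ)..1, x ^ k * matsuokaPDF p x = (p / (p + k)) ^ ((3:ℝ)/2)) ∧
    (∫ x in (0:ℝ)..1, x * matsuokaPDF p x = (p / (p + 1)) ^ ((3:ℝ)/2)) ∧
    ((∫ x in (0:ℝ)..1, x ^ (2:ℕ) * matsuokaPDF p x)
        - (∫ x in (0:ℝ)..1, x * matsuokaPDF p x) ^ (2:ℕ)
      = (p / (p + 2)) ^ ((3:ℝ)/2) - (p / (p + 1)) ^ (3:ℕ)) := by
  have h1 : ∫ x in (0:ℝ)..1, x * matsuokaPDF p x = (p / (p + 1)) ^ ((3:ℝ)/2) := by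
    have := matsuoka_moment p hp 1 (by linarith)
    simpa [Real.rpow_one] using this
  have h2 : ∫ x in (0:ℝ)..1, x ^ (2:ℕ) * matsuokaPDF p x = (p / (p + 2)) ^ ((3:ℝ)/2) := by
    have := matsuoka_moment p hp 2 (by linarith)
    rw [← this]
    congr 1
    ext x
    rw [show ((2:ℝ)) = ((2:ℕ):ℝ) by norm_num, Real.rpow_natCast]
  refine ⟨fun k hk => matsuoka_moment p hp k hk, h1, ?_⟩
  rw [h1, h2]
  have hb : (0:ℝ) ≤ p / (p + 1) := by positivity
  congr 1
  rw [← Real.rpow_natCast ((p / (p+1)) ^ ((3:ℝ)/2)) 2, ← Real.rpow_mul hb,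
    ← Real.rpow_natCast (p / (p+1)) 3]
  norm_num
end

section
/- The k-th incomplete moment of X ~ M(p) at y ∈ (0,1), m_k(y) = ∫₀^y x^k f_p(x) dx, equals (2p^{3/2}/(√π·(p+k)^{3/2}))·Γ(3/2, -(p+k)·ln(y)), for any k > -p. -/
/-!
Substituting `x = exp (-z / (p + k))` maps `(0, y)` onto `(-(p + k) log y, ∞)`, and since
`x · x ^ k · x ^ (p - 1) = exp (-z)` and `-log x = z / (p + k)`, the integrand `x ^ k f_p(x) dx`
becomes a constant multiple of the gamma integrand `z ^ (1/2) exp (-z) dz`.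
-/

open MeasureTheory Real Set

/-- The upper incomplete gamma function `Γ(a, t) = ∫_t^∞ z^(a-1) e^(-z) dz`. -/
noncomputable def upperIncompleteGamma (a t : ℝ) : ℝ :=
  ∫ z in Set.Ioi t, z ^ (a - 1) * Real.exp (-z)

theorem image_exp_neg_div_Ioi {c : ℝ} (hc : 0 < c) (a : ℝ) :
    (fun z => exp (-z / c)) '' Ioi (-c * a) = Ioo 0 (exp a) := by
  have hlin : (fun z : ℝ => -z / c) '' Ioi (-c * a) = Iio a := by
    ext u
    refine ⟨?_, fun hu => ⟨-c * u, ?_, by field_simp⟩⟩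
    · rintro ⟨z, hz, rfl⟩
      rw [mem_Ioi] at hz
      rw [mem_Iio, div_lt_iff₀ hc]
      linarith
    · rw [mem_Ioi]
      nlinarith [mem_Iio.mp hu]
  rw [← image_exp_Iio, ← hlin, image_image]

theorem integral_Ioo_zero_eq_integral_Ioi_exp_neg_div {E : Type*} [NormedAddCommGroup E]
    [NormedSpace ℝ E] (g : ℝ → E) {c y : ℝ} (hc : 0 < c) (hy : 0 < y) :
    ∫ x in Ioo 0 y, g x = ∫ z in Ioi (-c * log y), (exp (-z / c) / c) • g (exp (-z / c)) := by
  have hderiv (z : ℝ) : HasDerivAt (fun z => exp (-z / c)) (exp (-z / c) * (-1 / c)) z := by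
    simpa using ((hasDerivAt_id z).neg.div_const c).exp
  have hinj : InjOn (fun z => exp (-z / c)) (Ioi (-c * log y)) := fun a _ b _ hab => by
    have hab' := exp_injective hab
    field_simp at hab'
    linarith
  rw [← exp_log hy, ← image_exp_neg_div_Ioi hc, log_exp,
    integral_image_eq_integral_abs_deriv_smul measurableSet_Ioi
      (fun z _ => (hderiv z).hasDerivWithinAt) hinj]
  refine setIntegral_congr_fun measurableSet_Ioi fun z _ => ?_
  rw [abs_mul, abs_of_pos (exp_pos _), abs_div, abs_neg, abs_one, abs_of_pos hc, mul_one_div]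

theorem matsuokaPDF_exp_neg_div {p c z : ℝ} (hc : 0 < c) (hz : 0 < z) :
    matsuokaPDF p (exp (-z / c)) = 2 * sqrt (p ^ 3 * z / (c * π)) * exp (-z / c * (p - 1)) := by
  have hmem : exp (-z / c) ∈ Ioo 0 1 :=
    ⟨exp_pos _, exp_lt_one_iff.mpr (div_neg_of_neg_of_pos (neg_neg_of_pos hz) hc)⟩
  rw [matsuokaPDF, if_pos hmem, log_exp, exp_mul]
  congr 3
  field_simp

theorem exp_neg_div_mul_rpow_mul_matsuokaPDF {p k z : ℝ} (hp : 0 < p) (hpk : 0 < p + k)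
    (hz : 0 < z) :
    exp (-z / (p + k)) / (p + k) * (exp (-z / (p + k)) ^ k * matsuokaPDF p (exp (-z / (p + k))))
      = 2 * p ^ ((3:ℝ) / 2) / (sqrt π * (p + k) ^ ((3:ℝ) / 2))
          * (z ^ ((3:ℝ) / 2 - 1) * exp (-z)) := by
  set c := p + k
  have hexp : exp (-z / c) * (exp (-z / c) ^ k * exp (-z / c * (p - 1))) = exp (-z) := by
    rw [← exp_mul, ← exp_add, ← exp_add]
    congr 1
    field_simp
    ring
  have hsqrt : sqrt (p ^ 3 * z / (c * π))
      = p ^ ((3:ℝ) / 2) * z ^ ((3:ℝ) / 2 - 1) / (sqrt c * sqrt π) := by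
    rw [sqrt_div' _ (by positivity), sqrt_mul (by positivity), sqrt_mul hpk.le, sqrt_eq_rpow,
      sqrt_eq_rpow, ← rpow_natCast, ← rpow_mul hp.le]
    norm_num
  have hc32 : c ^ ((3:ℝ) / 2) = c * sqrt c := by
    rw [show (3:ℝ) / 2 = 1 + 1 / 2 by norm_num, rpow_add hpk, rpow_one, sqrt_eq_rpow]
  rw [matsuokaPDF_exp_neg_div hpk hz, hsqrt, hc32, ← hexp]
  field_simp

theorem matsuoka_incomplete_moment (p : ℝ) (hp : 0 < p) (k : ℝ) (hk : -p < k) :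
    ∀ y ∈ Set.Ioo (0:ℝ) 1,
      ∫ x in (0:ℝ)..y, x ^ k * matsuokaPDF p x
        = (2 * p ^ ((3:ℝ)/2) / (Real.sqrt Real.pi * (p + k) ^ ((3:ℝ)/2)))
            * upperIncompleteGamma (3/2) (-(p + k) * Real.log y) := by
  rintro y ⟨hy0, hy1⟩
  have hpk : 0 < p + k := by linarith
  have hlower : 0 < -(p + k) * log y := by nlinarith [log_neg hy0 hy1]
  rw [intervalIntegral.integral_of_le hy0.le, integral_Ioc_eq_integral_Ioo,
    integral_Ioo_zero_eq_integral_Ioi_exp_neg_div _ hpk hy0, upperIncompleteGamma,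
    ← integral_const_mul]
  refine setIntegral_congr_fun measurableSet_Ioi fun z hz => ?_
  rw [smul_eq_mul]
  exact exp_neg_div_mul_rpow_mul_matsuokaPDF hp hpk (hlower.trans hz)
end

section
/- For X ~ M(p) and 0 < s < 1, ∫_s^1 x f_p(x) dx = (2p^{3/2}/(√π(p+1)^{3/2}))·γ(3/2, -(p+1)ln(s)), where γ(a,t) = ∫₀^t z^{a-1}e^{-z} dz is the lower incomplete gamma function. -/
open MeasureTheory Real Set

/-- The lower incomplete gamma function `γ(a, t) = ∫_0^t z^(a-1) e^(-z) dz`. -/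
noncomputable def lowerIncompleteGamma (a t : ℝ) : ℝ :=
  ∫ z in (0:ℝ)..t, z ^ (a - 1) * Real.exp (-z)

theorem matsuoka_tail_first_moment (p : ℝ) (hp : 0 < p) (s : ℝ) (hs : s ∈ Set.Ioo (0:ℝ) 1) :
    ∫ x in s..1, x * matsuokaPDF p x
      = (2 * p ^ ((3:ℝ)/2) / (Real.sqrt Real.pi * (p + 1) ^ ((3:ℝ)/2)))
          * lowerIncompleteGamma (3/2) (-(p + 1) * Real.log s) := by
  obtain ⟨hs0, hs1⟩ := hs
  have hp1 : (0:ℝ) < p + 1 := by linarith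
  have hs1' : s ≤ 1 := hs1.le
  -- substitution u = -(p+1) log x
  have hderiv : ∀ x ∈ Set.uIcc s 1,
      HasDerivAt (fun x => -(p+1) * Real.log x) (-(p+1)/x) x := by
    intro x hx
    rw [Set.uIcc_of_le hs1'] at hx
    have hx0 : x ≠ 0 := (lt_of_lt_of_le hs0 hx.1).ne'
    simpa [div_eq_mul_inv] using (Real.hasDerivAt_log hx0).const_mul (-(p+1))
  have hcont' : ContinuousOn (fun x => -(p+1)/x) (Set.uIcc s 1) := by
    apply ContinuousOn.div continuousOn_const continuousOn_id
    intro x hx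
    rw [Set.uIcc_of_le hs1'] at hx
    exact (lt_of_lt_of_le hs0 hx.1).ne'
  have hg : Continuous (fun z : ℝ => Real.sqrt z * Real.exp (-z)) := by
    exact Real.continuous_sqrt.mul (Real.continuous_exp.comp continuous_neg)
  have hsub := intervalIntegral.integral_comp_smul_deriv hderiv hcont' hg
  simp only [Function.comp, Real.log_one, mul_zero, smul_eq_mul] at hsub
  -- rewrite the left side of hsub
  have hA : (p+1) ^ ((3:ℝ)/2) = (p+1) * Real.sqrt (p+1) := by
    rw [Real.sqrt_eq_rpow, show (3:ℝ)/2 = 1 + 1/2 by norm_num,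
      Real.rpow_add hp1, Real.rpow_one]
  have key : ∀ x ∈ Set.uIcc s 1,
      (-(p+1)/x) * (Real.sqrt (-(p+1) * Real.log x) *
        Real.exp (-(-(p+1) * Real.log x)))
      = (-((p+1) * Real.sqrt (p+1))) * (Real.sqrt (-Real.log x) * x ^ p) := by
    intro x hx
    rw [Set.uIcc_of_le hs1'] at hx
    have hx0 : 0 < x := lt_of_lt_of_le hs0 hx.1
    have h1 : -(p+1) * Real.log x = (p+1) * (-Real.log x) := by ring
    have h2 : Real.exp (-(-(p+1) * Real.log x)) = x ^ (p+1) := by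
      rw [Real.rpow_def_of_pos hx0]
      ring_nf
    rw [h2, h1, Real.sqrt_mul hp1.le, Real.rpow_add hx0, Real.rpow_one]
    field_simp
  rw [intervalIntegral.integral_congr key, intervalIntegral.integral_const_mul] at hsub
  -- rewrite the theorem LHS
  have hC : Real.sqrt (p ^ 3 / Real.pi) = p ^ ((3:ℝ)/2) / Real.sqrt Real.pi := by
    rw [Real.sqrt_div (by positivity : (0:ℝ) ≤ p ^ 3), Real.sqrt_eq_rpow,
      ← Real.rpow_natCast p 3, ← Real.rpow_mul hp.le]
    norm_num
  have lhs_eq : ∀ x ∈ Set.uIcc s 1,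
      x * matsuokaPDF p x
      = (2 * p ^ ((3:ℝ)/2) / Real.sqrt Real.pi) * (Real.sqrt (-Real.log x) * x ^ p) := by
    intro x hx
    rw [Set.uIcc_of_le hs1'] at hx
    have hx0 : 0 < x := lt_of_lt_of_le hs0 hx.1
    rcases eq_or_lt_of_le hx.2 with h1 | h1
    · subst h1
      simp [matsuokaPDF]
    · have hmem : x ∈ Set.Ioo (0:ℝ) 1 := ⟨hx0, h1⟩
      rw [matsuokaPDF, if_pos hmem]
      have h3 : -(p ^ 3) * Real.log x / Real.pi = (p ^ 3 / Real.pi) * (-Real.log x) := by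
        ring
      rw [h3, Real.sqrt_mul (by positivity) _, hC]
      rw [show p - 1 = p + (-1) from by ring, Real.rpow_add hx0,
        Real.rpow_neg_one]
      field_simp
  rw [intervalIntegral.integral_congr lhs_eq, intervalIntegral.integral_const_mul]
  -- rewrite lowerIncompleteGamma
  have hgam : lowerIncompleteGamma (3/2) (-(p + 1) * Real.log s)
      = ∫ z in (0:ℝ)..(-(p+1) * Real.log s), Real.sqrt z * Real.exp (-z) := by
    unfold lowerIncompleteGamma
    congr 1
    ext z
    rw [show (3:ℝ)/2 - 1 = 1/2 by norm_num, ← Real.sqrt_eq_rpow]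
  rw [hgam, intervalIntegral.integral_symm (-(p+1) * Real.log s) 0, ← hsub, hA]
  have hπ : Real.sqrt Real.pi ≠ 0 := by positivity
  have hsq : Real.sqrt (p+1) ≠ 0 := by positivity
  field_simp
end
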